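/- arXiv:1805.05637 — 2 statements merged into one kernel-verified Lean document; each statement's English description precedes it below -/
import Mathlib

section
/- Let G be a countable directed graph which is cofinal and whose set NW_G of non-wandering vertices is non-empty. Then NW_G, together with the arrows NW_Ar = {a ∈ G_Ar : s(a) ∈ NW_G}, is a strongly connected subgraph of G: for every pair of vertices v, w ∈ NW_G there is a finite path of positive length from v to w all of whose arrows lie in NW_Ar. -/
open MeasureTheory
open scoped ENNReal

/-- A countable directed graph: countable sets of vertices and arrows together with
source and range maps. -/
structure CDG where
  V : Type
  A : Type
  countV : Countable V
  countA : Countable A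
  src : A → V
  rng : A → V

attribute [instance] CDG.countV CDG.countA

namespace CDG

/-- The space `P(G)` of infinite paths in `G`. -/
abbrev PathSpace (G : CDG) : Type :=
  {p : ℕ → G.A // ∀ i : ℕ, G.rng (p i) = G.src (p (i + 1))}

/-- The source vertex of an infinite path. -/
def isrc {G : CDG} (p : G.PathSpace) : G.V := G.src (p.1 0)

/-- The shift map `σ` on `P(G)`. -/
def shift {G : CDG} (p : G.PathSpace) : G.PathSpace :=
  ⟨fun i => p.1 (i + 1), fun i => p.2 (i + 1)⟩

/-- A countable set carries the discrete (Borel) σ-algebra. -/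
instance (G : CDG) : MeasurableSpace G.A := ⊤

/-- A finite path in `G`: a base vertex together with a (possibly empty) string of
composable arrows starting at the base vertex.  A finite path with no arrows is a vertex. -/
structure FinPath (G : CDG) where
  base : G.V
  arrows : List G.A
  head_src : ∀ a ∈ arrows.head?, G.src a = base
  chain : arrows.Chain' fun a b => G.rng a = G.src b

namespace FinPath

variable {G : CDG}

/-- The length `|μ|` of a finite path. -/
def length (μ : FinPath G) : ℕ := μ.arrows.length

/-- The source `s(μ)` of a finite path. -/
def fsrc (μ : FinPath G) : G.V := μ.base

/-- The range `r(μ)` of a finite path. -/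
def frng (μ : FinPath G) : G.V := μ.arrows.getLast?.elim μ.base G.rng

/-- A vertex, regarded as a finite path of length `0`. -/
def ofVertex (G : CDG) (v : G.V) : FinPath G :=
  ⟨v, [], by intro a ha; simp at ha, List.isChain_nil⟩

/-- Concatenation `μδ` of composable finite paths. -/
def concat (μ δ : FinPath G) (h : δ.base = μ.frng) : FinPath G where
  base := μ.base
  arrows := μ.arrows ++ δ.arrows
  head_src := by
    intro a ha
    cases hμ : μ.arrows with
    | nil =>
        rw [hμ] at ha
        simp only [List.nil_append] at ha
        have h1 : G.src a = δ.base := δ.head_src a ha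
        have h2 : μ.frng = μ.base := by simp [FinPath.frng, hμ]
        rw [h1, h, h2]
    | cons b l =>
        rw [hμ] at ha
        simp only [List.cons_append, List.head?_cons, Option.mem_def,
          Option.some.injEq] at ha
        cases ha
        exact μ.head_src _ (by rw [hμ]; rfl)
  chain := by
    refine List.IsChain.append μ.chain δ.chain ?_
    intro x hx y hy
    rw [Option.mem_def] at hx
    have h1 : μ.frng = G.rng x := by simp [FinPath.frng, hx]
    have h2 : G.src y = δ.base := δ.head_src y hy
    rw [h2, h, h1]

end FinPath

/-- The extension of a potential `F : G_Ar → ℝ` to finite paths: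
`F(μ) = Σ_{i} F(a_i)`, with `F(v) = 0` for vertices. -/
def pot {G : CDG} (F : G.A → ℝ) (μ : FinPath G) : ℝ := (μ.arrows.map F).sum

/-- The cylinder set `Z(μ)` of a finite path `μ`. -/
def cyl {G : CDG} (μ : FinPath G) : Set G.PathSpace :=
  {p | G.src (p.1 0) = μ.base ∧
    ∀ (i : ℕ) (h : i < μ.arrows.length), p.1 i = μ.arrows.get ⟨i, h⟩}

/-- The cylinder set `Z(v)` of a vertex `v`. -/
def cylV (G : CDG) (v : G.V) : Set G.PathSpace := {p | G.src (p.1 0) = v}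

/-- An `e^{βF}`-conformal measure on `P(G)`: a non-zero Borel measure giving finite
measure to each `Z(v)` and satisfying `m(σ(B ∩ Z(a))) = e^{βF(a)} m(B ∩ Z(a))`. -/
structure IsConformal (G : CDG) (F : G.A → ℝ) (β : ℝ)
    (m : Measure G.PathSpace) : Prop where
  ne_zero : m ≠ 0
  vert_fin : ∀ v : G.V, m (cylV G v) < ⊤
  conformal : ∀ (a : G.A) (B : Set G.PathSpace), MeasurableSet B →
      m (shift '' (B ∩ {p : G.PathSpace | p.1 0 = a})) =
        ENNReal.ofReal (Real.exp (β * F a)) * m (B ∩ {p : G.PathSpace | p.1 0 = a})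

/-- The set `NW_G` of non-wandering vertices: those supporting a loop. -/
def NW (G : CDG) : Set G.V :=
  {v | ∃ μ : FinPath G, 0 < μ.length ∧ μ.fsrc = v ∧ μ.frng = v}

/-- The set `V_∞` of sinks and infinite emitters. -/
def Vinf (G : CDG) : Set G.V :=
  {v | (∀ a : G.A, G.src a ≠ v) ∨ {a : G.A | G.src a = v}.Infinite}

/-- A hereditary subset of vertices. -/
def Hereditary (G : CDG) (H : Set G.V) : Prop :=
  ∀ a : G.A, G.src a ∈ H → G.rng a ∈ H

/-- A saturated subset of vertices. -/
def Saturated (G : CDG) (H : Set G.V) : Prop :=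
  ∀ v : G.V, v ∉ Vinf G → (∀ a : G.A, G.src a = v → G.rng a ∈ H) → v ∈ H

/-- `G` is cofinal when the only non-empty hereditary and saturated subset of
vertices is the set of all vertices. -/
def Cofinal (G : CDG) : Prop :=
  ∀ H : Set G.V, H.Nonempty → Hereditary G H → Saturated G H → H = Set.univ

/-- `P(G)_rec`: the paths passing through every arrow of `NW_Ar` infinitely often. -/
def recSet (G : CDG) : Set G.PathSpace :=
  {p | ∀ a : G.A, G.src a ∈ NW G → ∀ n : ℕ, ∃ i ≥ n, p.1 i = a}

/-- `P(G)_wan`: the paths visiting every vertex at most finitely many times. -/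
def wanSet (G : CDG) : Set G.PathSpace :=
  {p | ∀ v : G.V, {i : ℕ | G.src (p.1 i) = v}.Finite}

/-- The matrix entry `A(β)^n_{v,w} = Σ_μ e^{-βF(μ)} ∈ [0,∞]`, summing over finite
paths `μ` of length `n` with `s(μ) = v` and `r(μ) = w`. -/
noncomputable def Apow (G : CDG) (F : G.A → ℝ) (β : ℝ) (n : ℕ) (v w : G.V) : ℝ≥0∞ :=
  ∑' μ : {μ : FinPath G // μ.length = n ∧ μ.fsrc = v ∧ μ.frng = w},
    ENNReal.ofReal (Real.exp (-(β * pot F μ.1)))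

/-- An `A(β)`-harmonic vector: non-zero, finite, non-negative, and harmonic at
every vertex. -/
def IsHarmonicVec (G : CDG) (F : G.A → ℝ) (β : ℝ) (ψ : G.V → ℝ≥0∞) : Prop :=
  ψ ≠ 0 ∧ (∀ v : G.V, ψ v ≠ ⊤) ∧
    ∀ v : G.V, ψ v =
      ∑' a : {a : G.A // G.src a = v},
        ENNReal.ofReal (Real.exp (-(β * F a.1))) * ψ (G.rng a.1)

end CDG

/-!
Fix a non-wandering vertex `t`. The vertices that cannot reach `t` by a path of positive length
form a hereditary set; it is also saturated, because a path of positive length from `u` to `t`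
leaves `u` through an arrow whose range is either `t`, which returns to itself along its loop,
or another vertex reaching `t`. The set misses `t`, so by cofinality it is empty. Hence any two
non-wandering vertices `v`, `w` lie on a closed path `v ⇝ w ⇝ v`, and every vertex on the
segment `v ⇝ w` lies on that closed path and therefore supports a loop.
-/

open Relation

theorem Relation.TransGen.restrict_of_cycle {α : Type*} {r : α → α → Prop} {v x w : α}
    (hvx : ReflTransGen r v x) (hxw : TransGen r x w) (hwv : TransGen r w v) :
    TransGen (fun a b => TransGen r a a ∧ r a b) x w := by
  induction hxw using TransGen.head_induction_on with
  | single hxw =>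
    exact .single ⟨.head hxw (hwv.trans_left hvx), hxw⟩
  | head hxy hyw ih =>
    exact .head ⟨.head hxy (hyw.trans (hwv.trans_left hvx)), hxy⟩ (ih (hvx.tail hxy))

namespace CDG

variable {G : CDG}

def Adj (G : CDG) (u v : G.V) : Prop := ∃ a : G.A, G.src a = u ∧ G.rng a = v

def FinPath.single (a : G.A) : FinPath G :=
  ⟨G.src a, [a], by simp, List.isChain_singleton a⟩

@[simp]
theorem FinPath.arrows_single (a : G.A) : (FinPath.single a).arrows = [a] := rfl

theorem frng_of_arrows_eq_cons {μ : FinPath G} {a : G.A} {l : List G.A}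
    (h : μ.arrows = a :: l) : μ.frng = G.rng ((a :: l).getLast (List.cons_ne_nil a l)) := by
  simp [FinPath.frng, h, List.getLast?_eq_some_getLast]

theorem transGen_of_isChain (p : G.V → Prop) (a : G.A) (l : List G.A)
    (hchain : (a :: l).IsChain fun a b => G.rng a = G.src b)
    (hp : ∀ c ∈ a :: l, p (G.src c)) :
    TransGen (fun u v => p u ∧ Adj G u v) (G.src a)
      (G.rng ((a :: l).getLast (List.cons_ne_nil a l))) := by
  induction l generalizing a with
  | nil => exact .single ⟨hp a (by simp), a, rfl, rfl⟩
  | cons b l ih =>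
    obtain ⟨hab, hchain⟩ := List.isChain_cons_cons.mp hchain
    rw [List.getLast_cons_cons]
    exact .head ⟨hp a (by simp), a, rfl, hab⟩
      (ih b hchain fun c hc => hp c (List.mem_cons_of_mem a hc))

theorem exists_finPath_iff_transGen (p : G.V → Prop) (x y : G.V) :
    (∃ μ : FinPath G, 0 < μ.length ∧ μ.fsrc = x ∧ μ.frng = y ∧
      ∀ a ∈ μ.arrows, p (G.src a)) ↔ TransGen (fun u v => p u ∧ Adj G u v) x y := by
  constructor
  · rintro ⟨μ, hlen, rfl, rfl, hp⟩
    obtain ⟨a, l, hμ⟩ := List.exists_cons_of_length_pos hlen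
    have hsrc : G.src a = μ.fsrc := μ.head_src a (by simp [hμ])
    rw [frng_of_arrows_eq_cons hμ, ← hsrc]
    exact transGen_of_isChain p a l (hμ ▸ μ.chain) (hμ ▸ hp)
  · intro h
    induction h with
    | single hxy =>
      obtain ⟨hpx, a, rfl, rfl⟩ := hxy
      exact ⟨.single a, by simp [FinPath.length], rfl, rfl, by simpa using hpx⟩
    | tail _ hyz ih =>
      obtain ⟨μ, hlen, hsrc, hrng, hp⟩ := ih
      obtain ⟨hpy, a, rfl, rfl⟩ := hyz
      refine ⟨μ.concat (.single a) hrng.symm, ?_, hsrc, ?_, ?_⟩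
      · simp [FinPath.concat, FinPath.length]
      · simp [FinPath.concat, FinPath.frng]
      · simpa [FinPath.concat, or_imp, forall_and] using ⟨hp, hpy⟩

theorem mem_NW_iff {v : G.V} : v ∈ NW G ↔ TransGen (Adj G) v v := by
  simpa [NW] using exists_finPath_iff_transGen (fun _ => True) v v

theorem transGen_of_cofinal (hcof : Cofinal G) {t : G.V} (ht : TransGen (Adj G) t t)
    (x : G.V) : TransGen (Adj G) x t := by
  set H : Set G.V := {u | ¬ TransGen (Adj G) u t}
  have hher : Hereditary G H := fun a ha hrng => ha (.head ⟨a, rfl, rfl⟩ hrng)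
  have hsat : Saturated G H := by
    rintro u - hH hut
    obtain ⟨_, ⟨a, rfl, rfl⟩, hrng⟩ := TransGen.head'_iff.mp hut
    exact hH a rfl (TransGen.trans_right hrng ht)
  by_contra hx
  have ht' : t ∈ H := hcof H ⟨x, hx⟩ hher hsat ▸ Set.mem_univ t
  exact ht' ht

end CDG

open CDG in
theorem stmt4_general (G : CDG) (hcof : Cofinal G)
    (v w : G.V) (hv : v ∈ NW G) (hw : w ∈ NW G) :
    ∃ μ : FinPath G, 0 < μ.length ∧ μ.fsrc = v ∧ μ.frng = w ∧
      ∀ a ∈ μ.arrows, G.src a ∈ NW G := by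
  rw [mem_NW_iff] at hv hw
  have hvw : TransGen (Adj G) v w := transGen_of_cofinal hcof hw v
  have hwv : TransGen (Adj G) w v := transGen_of_cofinal hcof hv w
  refine (exists_finPath_iff_transGen (· ∈ NW G) v w).mpr ?_
  exact TransGen.mono (fun _ _ hxy => ⟨mem_NW_iff.mpr hxy.1, hxy.2⟩) v w
    (TransGen.restrict_of_cycle .refl hvw hwv)

open CDG in
/-- for a cofinal graph with `NW_G ≠ ∅`, the subgraph `NW_G` (with the
arrows emitted from `NW_G`) is strongly connected. -/
theorem stmt4 (G : CDG) (hcof : Cofinal G) (hne : (NW G).Nonempty)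
    (v w : G.V) (hv : v ∈ NW G) (hw : w ∈ NW G) :
    ∃ μ : FinPath G, 0 < μ.length ∧ μ.fsrc = v ∧ μ.frng = w ∧
      ∀ a ∈ μ.arrows, G.src a ∈ NW G :=
  stmt4_general G hcof v w hv hw
end

section
/- Let G be a countable directed graph with no loop κ of positive length satisfying F(κ) = 0, and let A, {S_a}, {P_v} be as in the context. Let μ, ν, δ be finite paths in G such that |δ| > max{|μ|, |ν|} and F(μ) = F(ν). Then P_δ S_μ S_ν* P_δ = 0 when μ ≠ ν, and P_δ S_μ S_μ* P_δ = P_δ P_μ when μ = ν. -/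
open MeasureTheory
open scoped ENNReal

/-- The element `S_μ` associated to a finite path `μ`, with `S_v = P_v` for a vertex. -/
def Spath {R : Type*} [Mul R] {G : CDG} (S : G.A → R) (P : G.V → R)
    (μ : CDG.FinPath G) : R :=
  match μ.arrows with
  | [] => P μ.base
  | a :: l => l.foldl (fun x b => x * S b) (S a)

/-!
Write `S_l` for the product of the `S_a` along a path `l`. The Toeplitz–Cuntz–Krieger relations
give `S_μ^* S_{μκ} = S_κ`, and `S_μ^* S_ν = 0` when neither of `μ`, `ν` extends the other, since
distinct arrows with a common source have orthogonal ranges; the only analytic input is that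
`x x^* ≤ q` for a projection `q` forces `q x = x`. So `S_δ^* S_μ` vanishes unless `μ` is an initial
segment of `δ`. If `μ` and `ν` both are, with `|μ| ≤ |ν|`, then `ν = μκ` and `δ = νk` with `κ`
nonempty, and `S_δ^* S_μ S_ν^* S_δ = S_{κk}^* S_k`, where `κk` starts at `r(μ)` and `k` at `r(ν)`.
As `F(κ) = F(ν) - F(μ) = 0`, the path `κ` is not a loop, so `r(μ) ≠ r(ν)` and the product vanishes
because `P_{r(μ)} P_{r(ν)} = 0`. Likewise `P_μ P_δ` is `P_δ` or `0`, which gives the second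
identity.
-/

section StarRing

variable {R : Type*} [NonUnitalRing R] [StarRing R]

/-- `(1 - q) x (1 - q)`, expanded so that it makes sense without a unit. -/
def complCompress (q : R) : R →+ R :=
  AddMonoidHom.mk' (fun x => x - q * x - x * q + q * x * q) fun x y => by
    simp only [mul_add, add_mul]
    abel

lemma complCompress_star_mul_self {q : R} (hq : IsSelfAdjoint q) (s : R) :
    complCompress q (star s * s) = star (s - s * q) * (s - s * q) := by
  simp only [complCompress, AddMonoidHom.mk'_apply, star_sub, star_mul, hq.star_eq, sub_mul,
    mul_sub, mul_assoc]
  abel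

lemma IsStarProjection.complCompress_self {q : R} (hq : IsStarProjection q) :
    complCompress q q = 0 := by
  simp only [complCompress, AddMonoidHom.mk'_apply, hq.isIdempotentElem.eq]
  abel

lemma IsStarProjection.mul_mul_self_eq_mul {p q : R} (hp : IsStarProjection p)
    (hq : IsStarProjection q) (h : q * p = p ∨ q * p = 0) : p * q * p = p * q := by
  have hpq : p * q = star (q * p) := by
    rw [star_mul, hp.isSelfAdjoint.star_eq, hq.isSelfAdjoint.star_eq]
  rcases h with h | h
  · rw [mul_assoc, h, hpq, h, hp.isIdempotentElem.eq, hp.isSelfAdjoint.star_eq]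
  · rw [mul_assoc, h, hpq, h, mul_zero, star_zero]

variable [PartialOrder R] [StarOrderedRing R]

lemma complCompress_nonneg {q x : R} (hq : IsSelfAdjoint q) (hx : 0 ≤ x) :
    0 ≤ complCompress q x := by
  rw [StarOrderedRing.nonneg_iff] at hx
  induction hx using AddSubmonoid.closure_induction with
  | mem _ hy =>
    obtain ⟨s, rfl⟩ := hy
    rw [complCompress_star_mul_self hq]
    exact star_mul_self_nonneg _
  | zero => simp
  | add _ _ _ _ hy hz => rw [map_add]; exact add_nonneg hy hz

end StarRing

section CStarRing

variable {R : Type*} [NonUnitalNormedRing R] [StarRing R] [CStarRing R]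

lemma IsStarProjection.mul_eq_self_of_star_mul_self_eq {p x : R} (hp : IsStarProjection p)
    (hx : star x * x = p) : x * p = x := by
  have h : star (x * p - x) * (x * p - x) = 0 := by
    simp only [star_sub, star_mul, hp.isSelfAdjoint.star_eq, sub_mul, mul_sub, mul_assoc, hx]
    simp only [← mul_assoc, hx, hp.isIdempotentElem.eq]
    abel
  rw [CStarRing.star_mul_self_eq_zero_iff, sub_eq_zero] at h
  exact h

lemma IsStarProjection.mul_star_of_star_mul_self {x : R}
    (hx : IsStarProjection (star x * x)) : IsStarProjection (x * star x) := by
  refine ⟨?_, IsSelfAdjoint.mul_star_self x⟩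
  have hxx : x * (star x * x) = x := hx.mul_eq_self_of_star_mul_self_eq rfl
  rw [IsIdempotentElem, ← mul_assoc, mul_assoc x, hxx]

variable [PartialOrder R] [StarOrderedRing R]

lemma IsStarProjection.mul_eq_self_of_mul_star_le {q x : R} (hq : IsStarProjection q)
    (hle : x * star x ≤ q) : q * x = x := by
  -- `0 ≤ (1 - q) (q - x x^*) (1 - q) = -|x^* (1 - q)|²`
  set y := star x - star x * q
  have hy : complCompress q (x * star x) = star y * y := by
    have h := complCompress_star_mul_self hq.isSelfAdjoint (star x)
    rwa [star_star] at h
  have hpos : 0 ≤ complCompress q (q - x * star x) :=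
    complCompress_nonneg hq.isSelfAdjoint (sub_nonneg.2 hle)
  rw [map_sub, hq.complCompress_self, zero_sub, hy, neg_nonneg] at hpos
  have hy0 : y = 0 :=
    (CStarRing.star_mul_self_eq_zero_iff y).1 (le_antisymm hpos (star_mul_self_nonneg y))
  have := congrArg star hy0
  simp only [y, star_sub, star_mul, star_star, hq.isSelfAdjoint.star_eq, star_zero,
    sub_eq_zero] at this
  exact this.symm

end CStarRing

namespace CDG

variable {G : CDG}

def IsPathFrom (G : CDG) : G.V → List G.A → Prop
  | _, [] => True
  | v, a :: l => G.src a = v ∧ G.IsPathFrom (G.rng a) l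

def endpoint (G : CDG) : G.V → List G.A → G.V
  | v, [] => v
  | _, a :: l => G.endpoint (G.rng a) l

lemma isPathFrom_iff {v : G.V} {l : List G.A} :
    G.IsPathFrom v l ↔
      (∀ a ∈ l.head?, G.src a = v) ∧ l.IsChain fun a b => G.rng a = G.src b := by
  induction l generalizing v with
  | nil => simp [IsPathFrom]
  | cons a l ih =>
    simp only [IsPathFrom, ih, List.head?_cons, Option.mem_some_iff, forall_eq',
      List.isChain_cons]
    constructor <;> rintro ⟨h₁, h₂, h₃⟩ <;>
      exact ⟨h₁, fun b hb => (h₂ b hb).symm, h₃⟩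

lemma endpoint_append (v : G.V) (l m : List G.A) :
    G.endpoint v (l ++ m) = G.endpoint (G.endpoint v l) m := by
  induction l generalizing v with
  | nil => rfl
  | cons a l ih => exact ih _

lemma isPathFrom_append {v : G.V} {l m : List G.A} :
    G.IsPathFrom v (l ++ m) ↔ G.IsPathFrom v l ∧ G.IsPathFrom (G.endpoint v l) m := by
  induction l generalizing v with
  | nil => simp [IsPathFrom, endpoint]
  | cons a l ih => simp only [List.cons_append, IsPathFrom, ih, endpoint, and_assoc]

namespace FinPath

lemma ext {μ ν : FinPath G} (hbase : μ.base = ν.base) (harrows : μ.arrows = ν.arrows) :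
    μ = ν := by
  cases μ; cases ν; cases hbase; cases harrows; rfl

lemma isPathFrom (μ : FinPath G) : G.IsPathFrom μ.base μ.arrows :=
  isPathFrom_iff.2 ⟨μ.head_src, μ.chain⟩

lemma frng_eq_endpoint (μ : FinPath G) : μ.frng = G.endpoint μ.base μ.arrows := by
  suffices h : ∀ (v : G.V) (l : List G.A), l.getLast?.elim v G.rng = G.endpoint v l from
    h μ.base μ.arrows
  intro v l
  induction l generalizing v with
  | nil => rfl
  | cons a l ih => rw [List.getLast?_cons, endpoint, ← ih]; cases l.getLast? <;> rfl

def ofIsPathFrom {v : G.V} {l : List G.A} (h : G.IsPathFrom v l) : FinPath G :=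
  ⟨v, l, (isPathFrom_iff.1 h).1, (isPathFrom_iff.1 h).2⟩

def IsPrefix (μ δ : FinPath G) : Prop := μ.base = δ.base ∧ μ.arrows <+: δ.arrows

section Append

variable {μ δ : FinPath G} {k : List G.A}

lemma frng_eq_endpoint_of_append_eq (hbase : μ.base = δ.base)
    (harrows : δ.arrows = μ.arrows ++ k) : δ.frng = G.endpoint μ.frng k := by
  rw [frng_eq_endpoint, frng_eq_endpoint, harrows, ← hbase, endpoint_append]

lemma isPathFrom_frng_of_append_eq (hbase : μ.base = δ.base)
    (harrows : δ.arrows = μ.arrows ++ k) : G.IsPathFrom μ.frng k := by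
  have h := δ.isPathFrom
  rw [harrows, ← hbase, isPathFrom_append, ← frng_eq_endpoint] at h
  exact h.2

lemma frng_ne_of_append_eq {F : G.A → ℝ} (hbase : μ.base = δ.base)
    (harrows : δ.arrows = μ.arrows ++ k)
    (hnoloop : ∀ κ : FinPath G, 0 < κ.length → κ.fsrc = κ.frng → pot F κ ≠ 0)
    (hk : k ≠ []) (hF : pot F μ = pot F δ) : μ.frng ≠ δ.frng := by
  intro hfrng
  let κ := ofIsPathFrom (isPathFrom_frng_of_append_eq hbase harrows)
  have hκ : κ.frng = δ.frng := by
    rw [frng_eq_endpoint, frng_eq_endpoint_of_append_eq hbase harrows]; rfl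
  refine hnoloop κ (List.length_pos_of_ne_nil hk) (hκ.trans hfrng.symm).symm ?_
  simp only [pot, harrows, List.map_append, List.sum_append] at hF
  change (k.map F).sum = 0
  linarith

end Append

end FinPath

end CDG

open CDG

structure IsToeplitzCKFamily {R : Type*} [NonUnitalRing R] [StarRing R] [PartialOrder R]
    (G : CDG) (S : G.A → R) (P : G.V → R) : Prop where
  isStarProjection : ∀ v, IsStarProjection (P v)
  mul_eq_zero_of_ne : ∀ v w, v ≠ w → P v * P w = 0
  star_mul_self : ∀ a, star (S a) * S a = P (G.rng a)
  sum_mul_star_le : ∀ (v : G.V) (E : Finset G.A), (∀ a ∈ E, G.src a = v) →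
    ∑ a ∈ E, S a * star (S a) ≤ P v

/-- `S_l` for a path `l` from `v`, normalized to the right-nested product
`S_{a₁} (S_{a₂} ⋯ (S_{aₙ} P_{r(aₙ)}))` so that the empty path at `v` gives `P_v`. -/
def pathWord {R : Type*} [Mul R] {G : CDG} (S : G.A → R) (P : G.V → R) : G.V → List G.A → R
  | v, [] => P v
  | _, a :: l => S a * pathWord S P (G.rng a) l

namespace IsToeplitzCKFamily

section

variable {R : Type*} [NonUnitalRing R] [StarRing R] [PartialOrder R]
  {G : CDG} {S : G.A → R} {P : G.V → R}

lemma mul_star_le (hSP : IsToeplitzCKFamily G S P) (a : G.A) :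
    S a * star (S a) ≤ P (G.src a) := by
  simpa using hSP.sum_mul_star_le (G.src a) {a} (by simp)

lemma star_P (hSP : IsToeplitzCKFamily G S P) (v : G.V) : star (P v) = P v :=
  (hSP.isStarProjection v).isSelfAdjoint.star_eq

lemma P_mul_P (hSP : IsToeplitzCKFamily G S P) (v : G.V) : P v * P v = P v :=
  (hSP.isStarProjection v).isIdempotentElem.eq

end

variable {R : Type*} [NonUnitalNormedRing R] [StarRing R] [CStarRing R] [PartialOrder R]
  {G : CDG} {S : G.A → R} {P : G.V → R}

lemma mul_P_rng (hSP : IsToeplitzCKFamily G S P) (a : G.A) : S a * P (G.rng a) = S a :=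
  (hSP.isStarProjection _).mul_eq_self_of_star_mul_self_eq (hSP.star_mul_self a)

lemma foldl_mul_eq_mul_pathWord (hSP : IsToeplitzCKFamily G S P) (c : G.A) (l : List G.A) :
    l.foldl (fun x b => x * S b) (S c) = S c * pathWord S P (G.rng c) l := by
  induction l generalizing c with
  | nil => exact (hSP.mul_P_rng c).symm
  | cons b l ih =>
    have hassoc (x y : R) : l.foldl (fun z b => z * S b) (x * y) =
        x * l.foldl (fun z b => z * S b) y := by
      simp only [← List.foldl_map (f := S) (g := (· * ·))]
      exact List.foldl_assoc
    rw [List.foldl_cons, hassoc, ih, pathWord]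

lemma Spath_eq_pathWord (hSP : IsToeplitzCKFamily G S P) (μ : FinPath G) :
    Spath S P μ = pathWord S P μ.base μ.arrows := by
  unfold Spath
  split
  case h_1 h => rw [h, pathWord]
  case h_2 a l h => rw [h, pathWord, hSP.foldl_mul_eq_mul_pathWord]

variable [StarOrderedRing R]

lemma P_src_mul (hSP : IsToeplitzCKFamily G S P) (a : G.A) : P (G.src a) * S a = S a :=
  (hSP.isStarProjection _).mul_eq_self_of_mul_star_le (hSP.mul_star_le a)

lemma star_mul_eq_zero (hSP : IsToeplitzCKFamily G S P) {a b : G.A} (hab : a ≠ b)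
    (hsrc : G.src a = G.src b) : star (S a) * S b = 0 := by
  classical
  -- conjugating `S_a S_a^* + S_b S_b^* ≤ P_{s(b)}` by `S_b` leaves `|S_a^* S_b|² ≤ 0`
  have hsum : S a * star (S a) + S b * star (S b) ≤ P (G.src b) := by
    simpa [Finset.sum_pair hab] using hSP.sum_mul_star_le (G.src b) {a, b} (by simp [hsrc])
  have hP : star (S b) * P (G.src b) * S b = P (G.rng b) := by
    rw [mul_assoc, hSP.P_src_mul, hSP.star_mul_self]
  have hS : star (S b) * (S b * star (S b)) * S b = P (G.rng b) := by
    rw [← mul_assoc, hSP.star_mul_self, mul_assoc, hSP.star_mul_self, hSP.P_mul_P]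
  have hconj := star_left_conjugate_le_conjugate hsum (S b)
  rw [mul_add, add_mul, hP, hS, add_le_iff_nonpos_left] at hconj
  have h : star (star (S a) * S b) * (star (S a) * S b) = 0 :=
    le_antisymm (by simpa only [star_mul, star_star, mul_assoc] using hconj)
      (star_mul_self_nonneg _)
  exact (CStarRing.star_mul_self_eq_zero_iff _).1 h

lemma P_mul_pathWord (hSP : IsToeplitzCKFamily G S P) {v : G.V} {l : List G.A}
    (hl : G.IsPathFrom v l) : P v * pathWord S P v l = pathWord S P v l := by
  cases l with
  | nil => exact hSP.P_mul_P v
  | cons a l => rw [pathWord, ← mul_assoc, ← hl.1, hSP.P_src_mul]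

lemma pathWord_append (hSP : IsToeplitzCKFamily G S P) {v : G.V} {l m : List G.A}
    (hm : G.IsPathFrom (G.endpoint v l) m) :
    pathWord S P v (l ++ m) = pathWord S P v l * pathWord S P (G.endpoint v l) m := by
  induction l generalizing v with
  | nil => exact (hSP.P_mul_pathWord hm).symm
  | cons a l ih => rw [List.cons_append, pathWord, pathWord, ih hm, mul_assoc]; rfl

lemma star_pathWord_mul_pathWord_append (hSP : IsToeplitzCKFamily G S P) {v : G.V}
    {l m : List G.A} (hl : G.IsPathFrom v l) (hm : G.IsPathFrom (G.endpoint v l) m) :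
    star (pathWord S P v l) * pathWord S P v (l ++ m) = pathWord S P (G.endpoint v l) m := by
  induction l generalizing v with
  | nil => rw [List.nil_append, pathWord, hSP.star_P]; exact hSP.P_mul_pathWord hm
  | cons a l ih =>
    have hstar : star (pathWord S P (G.rng a) l) * P (G.rng a) =
        star (pathWord S P (G.rng a) l) := by
      rw [← hSP.star_P, ← star_mul, hSP.P_mul_pathWord hl.2]
    calc star (pathWord S P v (a :: l)) * pathWord S P v (a :: l ++ m)
        = star (pathWord S P (G.rng a) l) * (star (S a) * S a) *
            pathWord S P (G.rng a) (l ++ m) := by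
          simp only [List.cons_append, pathWord, star_mul, mul_assoc]
      _ = pathWord S P (G.endpoint v (a :: l)) m := by
          rw [hSP.star_mul_self, hstar, ih hl.2 hm]; rfl

lemma star_pathWord_mul_self (hSP : IsToeplitzCKFamily G S P) {v : G.V} {l : List G.A}
    (hl : G.IsPathFrom v l) :
    star (pathWord S P v l) * pathWord S P v l = P (G.endpoint v l) := by
  simpa [pathWord] using hSP.star_pathWord_mul_pathWord_append hl (m := []) trivial

lemma star_pathWord_mul_pathWord_of_ne (hSP : IsToeplitzCKFamily G S P) {v w : G.V}
    {l m : List G.A} (hvw : v ≠ w) (hl : G.IsPathFrom v l) (hm : G.IsPathFrom w m) :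
    star (pathWord S P v l) * pathWord S P w m = 0 := by
  rw [← hSP.P_mul_pathWord hl, ← hSP.P_mul_pathWord hm, star_mul, hSP.star_P, mul_assoc,
    ← mul_assoc (P v), hSP.mul_eq_zero_of_ne v w hvw, zero_mul, mul_zero]

lemma star_pathWord_mul_pathWord_of_not_prefix (hSP : IsToeplitzCKFamily G S P) {v : G.V}
    {l m : List G.A} (hl : G.IsPathFrom v l) (hm : G.IsPathFrom v m) (hlm : ¬ l <+: m)
    (hml : ¬ m <+: l) : star (pathWord S P v l) * pathWord S P v m = 0 := by
  induction l generalizing v m with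
  | nil => exact absurd List.nil_prefix hlm
  | cons a l ih =>
    cases m with
    | nil => exact absurd List.nil_prefix hml
    | cons b m =>
      simp only [pathWord, star_mul, mul_assoc]
      by_cases hab : a = b
      · subst hab
        rw [← mul_assoc (star (S a)), hSP.star_mul_self, hSP.P_mul_pathWord hm.2]
        exact ih hl.2 hm.2 (fun h => hlm (List.cons_prefix_cons.2 ⟨rfl, h⟩))
          (fun h => hml (List.cons_prefix_cons.2 ⟨rfl, h⟩))
      · rw [← mul_assoc (star (S a)), hSP.star_mul_eq_zero hab (hl.1.trans hm.1.symm),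
          zero_mul, mul_zero]

lemma star_Spath_mul_self (hSP : IsToeplitzCKFamily G S P) (μ : FinPath G) :
    star (Spath S P μ) * Spath S P μ = P μ.frng := by
  rw [hSP.Spath_eq_pathWord, hSP.star_pathWord_mul_self μ.isPathFrom, μ.frng_eq_endpoint]

lemma isStarProjection_Spath_mul_star (hSP : IsToeplitzCKFamily G S P) (μ : FinPath G) :
    IsStarProjection (Spath S P μ * star (Spath S P μ)) :=
  .mul_star_of_star_mul_self (by rw [hSP.star_Spath_mul_self]; exact hSP.isStarProjection _)

variable {μ δ : FinPath G} {k : List G.A}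

lemma star_Spath_mul_Spath_of_append_eq (hSP : IsToeplitzCKFamily G S P)
    (hbase : μ.base = δ.base) (harrows : δ.arrows = μ.arrows ++ k) :
    star (Spath S P μ) * Spath S P δ = pathWord S P μ.frng k := by
  have hk := FinPath.isPathFrom_frng_of_append_eq hbase harrows
  rw [FinPath.frng_eq_endpoint] at hk ⊢
  rw [hSP.Spath_eq_pathWord, hSP.Spath_eq_pathWord, harrows, ← hbase]
  exact hSP.star_pathWord_mul_pathWord_append μ.isPathFrom hk

lemma Spath_mul_pathWord_of_append_eq (hSP : IsToeplitzCKFamily G S P)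
    (hbase : μ.base = δ.base) (harrows : δ.arrows = μ.arrows ++ k) :
    Spath S P μ * pathWord S P μ.frng k = Spath S P δ := by
  have hk := FinPath.isPathFrom_frng_of_append_eq hbase harrows
  rw [FinPath.frng_eq_endpoint] at hk ⊢
  rw [hSP.Spath_eq_pathWord, hSP.Spath_eq_pathWord, harrows, ← hbase,
    hSP.pathWord_append hk]

lemma star_Spath_mul_Spath_of_not_isPrefix (hSP : IsToeplitzCKFamily G S P)
    (hlen : μ.length ≤ δ.length) (h : ¬ μ.IsPrefix δ) :
    star (Spath S P μ) * Spath S P δ = 0 := by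
  rw [hSP.Spath_eq_pathWord, hSP.Spath_eq_pathWord]
  by_cases hbase : μ.base = δ.base
  · have hμ := μ.isPathFrom
    rw [hbase] at hμ ⊢
    refine hSP.star_pathWord_mul_pathWord_of_not_prefix hμ δ.isPathFrom
      (fun hp => h ⟨hbase, hp⟩) fun hp => h ⟨hbase, ?_⟩
    rw [hp.eq_of_length_le hlen]
  · exact hSP.star_pathWord_mul_pathWord_of_ne hbase μ.isPathFrom δ.isPathFrom

lemma Spath_mul_star_mul_eq_self_or_eq_zero (hSP : IsToeplitzCKFamily G S P)
    (hlen : μ.length ≤ δ.length) :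
    Spath S P μ * star (Spath S P μ) * (Spath S P δ * star (Spath S P δ)) =
        Spath S P δ * star (Spath S P δ) ∨
      Spath S P μ * star (Spath S P μ) * (Spath S P δ * star (Spath S P δ)) = 0 := by
  have hassoc : Spath S P μ * star (Spath S P μ) * (Spath S P δ * star (Spath S P δ)) =
      Spath S P μ * (star (Spath S P μ) * Spath S P δ) * star (Spath S P δ) := by
    simp only [mul_assoc]
  rw [hassoc]
  by_cases h : μ.IsPrefix δ
  · obtain ⟨hbase, k, hk⟩ := h
    left
    rw [hSP.star_Spath_mul_Spath_of_append_eq hbase hk.symm,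
      hSP.Spath_mul_pathWord_of_append_eq hbase hk.symm]
  · right
    rw [hSP.star_Spath_mul_Spath_of_not_isPrefix hlen h, mul_zero, zero_mul]

lemma star_Spath_mul_Spath_mul_star_Spath_mul_Spath_eq_zero (hSP : IsToeplitzCKFamily G S P)
    {F : G.A → ℝ}
    (hnoloop : ∀ κ : FinPath G, 0 < κ.length → κ.fsrc = κ.frng → pot F κ ≠ 0)
    {μ ν δ : FinPath G} (hμ : μ.length < δ.length) (hν : ν.length < δ.length)
    (hF : pot F μ = pot F ν) (hne : μ ≠ ν) :
    star (Spath S P δ) * Spath S P μ * star (Spath S P ν) * Spath S P δ = 0 := by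
  wlog hle : μ.length ≤ ν.length generalizing μ ν
  · simpa only [star_mul, star_star, star_zero, mul_assoc] using
      congrArg star (this hν hμ hF.symm hne.symm (le_of_not_ge hle))
  by_cases hμδ : μ.IsPrefix δ
  swap
  · rw [← star_star (Spath S P μ), ← star_mul,
      hSP.star_Spath_mul_Spath_of_not_isPrefix hμ.le hμδ, star_zero, zero_mul, zero_mul]
  by_cases hνδ : ν.IsPrefix δ
  swap
  · rw [mul_assoc, hSP.star_Spath_mul_Spath_of_not_isPrefix hν.le hνδ, mul_zero]
  obtain ⟨hμbase, hμδ⟩ := hμδ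
  obtain ⟨hνbase, k, hk⟩ := hνδ
  obtain ⟨κ, hκ⟩ := List.prefix_of_prefix_length_le hμδ ⟨k, hk⟩ hle
  have hμν : μ.base = ν.base := hμbase.trans hνbase.symm
  have hκne : κ ≠ [] := by
    rintro rfl
    exact hne (FinPath.ext hμν (by rw [← hκ, List.append_nil]))
  have hδ : δ.arrows = μ.arrows ++ (κ ++ k) := by rw [← hk, ← hκ, List.append_assoc]
  have hfrng := FinPath.frng_ne_of_append_eq hμν hκ.symm hnoloop hκne hF
  rw [← star_star (Spath S P μ), ← star_mul, hSP.star_Spath_mul_Spath_of_append_eq hμbase hδ,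
    mul_assoc, hSP.star_Spath_mul_Spath_of_append_eq hνbase hk.symm]
  exact hSP.star_pathWord_mul_pathWord_of_ne hfrng
    (FinPath.isPathFrom_frng_of_append_eq hμbase hδ)
    (FinPath.isPathFrom_frng_of_append_eq hνbase hk.symm)

end IsToeplitzCKFamily

open CDG in
theorem stmt17_general {R : Type*} [NonUnitalNormedRing R] [StarRing R] [CStarRing R]
    [PartialOrder R] [StarOrderedRing R]
    (G : CDG) (F : G.A → ℝ)
    (hnoloop : ∀ κ : FinPath G, 0 < κ.length → κ.fsrc = κ.frng → pot F κ ≠ 0)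
    (S : G.A → R) (P : G.V → R)
    (hsa : ∀ v : G.V, IsSelfAdjoint (P v))
    (hidem : ∀ v : G.V, P v * P v = P v)
    (horth : ∀ v w : G.V, v ≠ w → P v * P w = 0)
    (hck1 : ∀ a : G.A, star (S a) * S a = P (G.rng a))
    (hck3 : ∀ (v : G.V) (E : Finset G.A), (∀ a ∈ E, G.src a = v) →
      ∑ a ∈ E, S a * star (S a) ≤ P v)
    (μ ν δ : FinPath G) (hlen : max μ.length ν.length < δ.length)
    (hF : pot F μ = pot F ν) :
    (μ ≠ ν →
      (Spath S P δ * star (Spath S P δ)) * (Spath S P μ * star (Spath S P ν)) *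
        (Spath S P δ * star (Spath S P δ)) = 0) ∧
    ((Spath S P δ * star (Spath S P δ)) * (Spath S P μ * star (Spath S P μ)) *
        (Spath S P δ * star (Spath S P δ)) =
      (Spath S P δ * star (Spath S P δ)) * (Spath S P μ * star (Spath S P μ))) := by
  have hSP : IsToeplitzCKFamily G S P := ⟨fun v => ⟨hidem v, hsa v⟩, horth, hck1, hck3⟩
  obtain ⟨hμ, hν⟩ := max_lt_iff.1 hlen
  refine ⟨fun hne => ?_, ?_⟩
  · have h := hSP.star_Spath_mul_Spath_mul_star_Spath_mul_Spath_eq_zero hnoloop hμ hν hF hne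
    calc _ = Spath S P δ * (star (Spath S P δ) * Spath S P μ * star (Spath S P ν) *
          Spath S P δ) * star (Spath S P δ) := by simp only [mul_assoc]
      _ = 0 := by rw [h, mul_zero, zero_mul]
  · exact (hSP.isStarProjection_Spath_mul_star δ).mul_mul_self_eq_mul
      (hSP.isStarProjection_Spath_mul_star μ)
      (hSP.Spath_mul_star_mul_eq_self_or_eq_zero hμ.le)

open CDG in
/-- in a C*-algebra with Cuntz–Krieger elements for `G`, if `G` has no
loop `κ` of positive length with `F(κ) = 0`, and `μ, ν, δ` are finite paths with
`|δ| > max{|μ|,|ν|}` and `F(μ) = F(ν)`, then `P_δ S_μ S_ν* P_δ = 0` when `μ ≠ ν` and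
`P_δ S_μ S_μ* P_δ = P_δ P_μ`. -/
theorem stmt17 {R : Type*} [NonUnitalNormedRing R] [StarRing R] [CStarRing R]
    [PartialOrder R] [StarOrderedRing R] [CompleteSpace R]
    (G : CDG) (F : G.A → ℝ)
    (hnoloop : ∀ κ : FinPath G, 0 < κ.length → κ.fsrc = κ.frng → pot F κ ≠ 0)
    (S : G.A → R) (P : G.V → R)
    (hsa : ∀ v : G.V, IsSelfAdjoint (P v))
    (hidem : ∀ v : G.V, P v * P v = P v)
    (horth : ∀ v w : G.V, v ≠ w → P v * P w = 0)
    (hck1 : ∀ a : G.A, star (S a) * S a = P (G.rng a))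
    (hck2 : ∀ a : G.A, S a * star (S a) ≤ P (G.src a))
    (hck3 : ∀ (v : G.V) (E : Finset G.A), (∀ a ∈ E, G.src a = v) →
      ∑ a ∈ E, S a * star (S a) ≤ P v)
    (hck4 : ∀ v : G.V, v ∉ Vinf G → ∀ E : Finset G.A,
      (↑E = {a : G.A | G.src a = v}) → P v = ∑ a ∈ E, S a * star (S a))
    (μ ν δ : FinPath G) (hlen : max μ.length ν.length < δ.length)
    (hF : pot F μ = pot F ν) :
    (μ ≠ ν →
      (Spath S P δ * star (Spath S P δ)) * (Spath S P μ * star (Spath S P ν)) *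
        (Spath S P δ * star (Spath S P δ)) = 0) ∧
    ((Spath S P δ * star (Spath S P δ)) * (Spath S P μ * star (Spath S P μ)) *
        (Spath S P δ * star (Spath S P δ)) =
      (Spath S P δ * star (Spath S P δ)) * (Spath S P μ * star (Spath S P μ))) :=
  stmt17_general G F hnoloop S P hsa hidem horth hck1 hck3 μ ν δ hlen hF
end
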